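/- arXiv:math/0601464 — 6 statements merged into one kernel-verified Lean document; each statement's English description precedes it below -/
import Mathlib

section
/- Let C be a coalgebra over a commutative ring k and Σ a right C-comodule. Define Q = { q : Σ → C* | for all x ∈ Σ, c ∈ C : Σ q(x₍₀₎)(c) x₍₁₎ = Σ c₍₁₎ q(x)(c₍₂₎) }. Then for every right C-comodule M, every q ∈ Q and every m ∈ M, the map Σ → M given by x ↦ m·q(x) (using the right C*-action on M) is a morphism of right C-comodules. -/
open TensorProduct

noncomputable section

/-- A right comodule structure on `M` over a `k`-coalgebra `C`. -/
structure RightComodule (k C M : Type*) [CommRing k] [AddCommGroup C] [Module k C]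
    [Coalgebra k C] [AddCommGroup M] [Module k M] where
  ρ : M →ₗ[k] M ⊗[k] C
  coassoc : ∀ m : M,
    (TensorProduct.assoc k M C C) (ρ.rTensor C (ρ m)) =
      (Coalgebra.comul (R := k) (A := C)).lTensor M (ρ m)
  counit_comp : ∀ m : M,
    (TensorProduct.rid k M) ((Coalgebra.counit (R := k) (A := C)).lTensor M (ρ m)) = m

variable {k C M N : Type*} [CommRing k] [AddCommGroup C] [Module k C] [Coalgebra k C]

/-- Convolution product on the dual of a coalgebra: `(conv f g) c = ∑ f c₍₁₎ * g c₍₂₎`. -/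
def conv (f g : C →ₗ[k] k) : C →ₗ[k] k :=
  (TensorProduct.lid k k).toLinearMap ∘ₗ TensorProduct.map f g ∘ₗ Coalgebra.comul

/-- The right action of the dual of `C` on a right `C`-comodule: `x · f = ∑ x₍₀₎ * f x₍₁₎`. -/
def ract [AddCommGroup M] [Module k M] (σ : RightComodule k C M) (m : M)
    (f : C →ₗ[k] k) : M :=
  (TensorProduct.rid k M) (f.lTensor M (σ.ρ m))

/-- A map of right `C`-comodules. -/
def IsColinear [AddCommGroup M] [Module k M] [AddCommGroup N] [Module k N]
    (σM : RightComodule k C M) (σN : RightComodule k C N) (φ : M →ₗ[k] N) : Prop :=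
  φ.rTensor C ∘ₗ σM.ρ = σN.ρ ∘ₗ φ

/-- The `k`-module `Q` associated to a right `C`-comodule `M`:
maps `q : M → C*` with `∑ q x₍₀₎ c • x₍₁₎ = ∑ c₍₁₎ • q x c₍₂₎` for all `x, c`. -/
def QSet [AddCommGroup M] [Module k M] (σ : RightComodule k C M) :
    Set (M →ₗ[k] C →ₗ[k] k) :=
  { q | ∀ (x : M) (c : C),
      (TensorProduct.lid k C) (((LinearMap.applyₗ c).comp q).rTensor C (σ.ρ x)) =
      (TensorProduct.rid k C) ((q x).lTensor C (Coalgebra.comul c)) }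

/-! Write `ψ x = m · q x = ∑ m₍₀₎ q x (m₍₁₎)`. Coassociativity of `M` gives
`ρ (ψ x) = ∑ m₍₀₎ ⊗ m₍₁₎ q x (m₍₂₎)`, while `∑ ψ x₍₀₎ ⊗ x₍₁₎ = ∑ m₍₀₎ ⊗ q x₍₀₎ (m₍₁₎) x₍₁₎`
by moving scalars across the tensor sign; the defining identity of `Q` at `c = m₍₁₎` identifies
the two. -/

section Slice

omit [Coalgebra k C]

variable {M P D : Type*} [AddCommGroup M] [Module k M] [AddCommGroup P] [Module k P]
  [AddCommGroup D] [Module k D]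

def sliceRight : M ⊗[k] C →ₗ[k] (C →ₗ[k] k) →ₗ[k] M :=
  LinearMap.mk₂ k (fun u f => TensorProduct.rid k M (f.lTensor M u))
    (by simp) (by simp) (by simp [LinearMap.lTensor_add]) (by simp [LinearMap.lTensor_smul])

@[simp]
lemma sliceRight_tmul (m : M) (c : C) (f : C →ₗ[k] k) :
    sliceRight (m ⊗ₜ[k] c) f = f c • m := by
  simp [sliceRight]

def sliceLeft (φ : P →ₗ[k] C →ₗ[k] k) : P ⊗[k] D →ₗ[k] C →ₗ[k] D :=
  LinearMap.mk₂ k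
    (fun v c => TensorProduct.lid k D (((LinearMap.applyₗ c).comp φ).rTensor D v))
    (by simp) (by simp) (by simp [LinearMap.add_comp, LinearMap.rTensor_add])
    (by simp [LinearMap.smul_comp, LinearMap.rTensor_smul])

@[simp]
lemma sliceLeft_tmul (φ : P →ₗ[k] C →ₗ[k] k) (p : P) (d : D) (c : C) :
    sliceLeft φ (p ⊗ₜ[k] d) c = φ p c • d := by
  simp [sliceLeft]

lemma rTensor_sliceRight_comp (u : M ⊗[k] C) (φ : P →ₗ[k] C →ₗ[k] k) (v : P ⊗[k] D) :
    ((sliceRight u) ∘ₗ φ).rTensor D v = (sliceLeft φ v).lTensor M u := by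
  induction u using TensorProduct.induction_on with
  | zero => simp
  | add u u' hu hu' => simp [LinearMap.add_comp, LinearMap.rTensor_add, hu, hu']
  | tmul m c =>
    induction v using TensorProduct.induction_on with
    | zero => simp
    | add v v' hv hv' => simp_all
    | tmul p d => simp [TensorProduct.smul_tmul]

lemma map_sliceRight (g : M →ₗ[k] P) (u : M ⊗[k] C) (f : C →ₗ[k] k) :
    g (sliceRight u f) = sliceRight (g.rTensor C u) f := by
  induction u using TensorProduct.induction_on with
  | zero => simp
  | add u u' hu hu' => simp [hu, hu']
  | tmul m c => simp

lemma sliceRight_assoc_symm (z : M ⊗[k] (C ⊗[k] C)) (f : C →ₗ[k] k) :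
    sliceRight ((TensorProduct.assoc k M C C).symm z) f =
      (sliceRight.flip f).lTensor M z := by
  induction z using TensorProduct.induction_on with
  | zero => simp
  | add z z' hz hz' => simp [hz, hz']
  | tmul m w =>
    induction w using TensorProduct.induction_on with
    | zero => simp
    | add w w' hw hw' => simp_all [TensorProduct.tmul_add]
    | tmul c c' => simp

end Slice

lemma ρ_ract {M : Type*} [AddCommGroup M] [Module k M] (σ : RightComodule k C M) (m : M)
    (f : C →ₗ[k] k) :
    σ.ρ (ract σ m f) = (sliceRight.flip f ∘ₗ Coalgebra.comul).lTensor M (σ.ρ m) :=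
  calc σ.ρ (ract σ m f) = sliceRight (σ.ρ.rTensor C (σ.ρ m)) f :=
        map_sliceRight σ.ρ (σ.ρ m) f
    _ = sliceRight ((TensorProduct.assoc k M C C).symm
          ((Coalgebra.comul (R := k) (A := C)).lTensor M (σ.ρ m))) f := by
      rw [← σ.coassoc, LinearEquiv.symm_apply_apply]
    _ = _ := by rw [sliceRight_assoc_symm, LinearMap.lTensor_comp_apply]

theorem stmt_1 {P M : Type*} [AddCommGroup P] [Module k P] [AddCommGroup M] [Module k M]
    (σ : RightComodule k C P) (σM : RightComodule k C M)
    (q : P →ₗ[k] C →ₗ[k] k) (hq : q ∈ QSet σ) (m : M) :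
    ∃ ψ : P →ₗ[k] M, (∀ x : P, ψ x = ract σM m (q x)) ∧ IsColinear σ σM ψ := by
  refine ⟨sliceRight (σM.ρ m) ∘ₗ q, fun x => rfl, LinearMap.ext fun x => ?_⟩
  have hqx : sliceLeft q (σ.ρ x) = sliceRight.flip (q x) ∘ₗ Coalgebra.comul :=
    LinearMap.ext (hq x)
  calc (sliceRight (σM.ρ m) ∘ₗ q).rTensor C (σ.ρ x)
      = (sliceLeft q (σ.ρ x)).lTensor M (σM.ρ m) := rTensor_sliceRight_comp _ _ _
    _ = σM.ρ (ract σM m (q x)) := by rw [hqx, ρ_ract]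
end
end

section
/- Let C be a coalgebra over a commutative ring k and Σ a right C-comodule. Suppose there exist finitely many elements q₁,…,qₙ ∈ Q (where Q = { q : Σ → C* | Σ q(x₍₀₎)(c) x₍₁₎ = Σ c₍₁₎ q(x)(c₍₂₎) }) and x₁,…,xₙ ∈ Σ such that Σᵢ qᵢ(xᵢ) = ε in C*. Then C is a finitely generated projective k-module; explicitly, the families fⱼ ⊗ cⱼ := Σᵢ qᵢ((xᵢ)₍₀₎) ⊗ (xᵢ)₍₁₎ form a dual basis: Σⱼ fⱼ(c) cⱼ = c for all c ∈ C. -/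
open TensorProduct

noncomputable section

variable {k C M N : Type*} [CommRing k] [AddCommGroup C] [Module k C] [Coalgebra k C]

/-!
Evaluating the first tensor factor of `∑ᵢ qᵢ (xᵢ)₍₀₎ ⊗ (xᵢ)₍₁₎` at `c ∈ C` gives, by the defining
identity of `Q`, `∑ᵢ c · qᵢ xᵢ`, where `C*` acts on the regular comodule `C` by
`c · f = ∑ c₍₁₎ f c₍₂₎`. This action is additive in `f` and `ε` acts trivially, so the sum is
`c · ε = c`. A finite dual basis makes `C` finitely generated projective.
-/

theorem dualTensorHom_apply_eq_lid_rTensor {R M N : Type*} [CommRing R] [AddCommGroup M]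
    [Module R M] [AddCommGroup N] [Module R N] (t : Module.Dual R M ⊗[R] N) (m : M) :
    dualTensorHom R M N t m = TensorProduct.lid R N ((LinearMap.applyₗ m).rTensor N t) := by
  induction t using TensorProduct.induction_on with
  | zero => simp
  | tmul f n => simp [dualTensorHom_apply]
  | add s t hs ht => simp [map_add, hs, ht]

def RightComodule.regular : RightComodule k C C where
  ρ := Coalgebra.comul
  coassoc := Coalgebra.coassoc_apply
  counit_comp c := by simp [Coalgebra.lTensor_counit_comul]

theorem ract_counit [AddCommGroup M] [Module k M] (σ : RightComodule k C M) (m : M) :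
    ract σ m Coalgebra.counit = m :=
  σ.counit_comp m

theorem ract_sum [AddCommGroup M] [Module k M] (σ : RightComodule k C M) (m : M)
    {ι : Type*} (s : Finset ι) (f : ι → C →ₗ[k] k) :
    ract σ m (∑ i ∈ s, f i) = ∑ i ∈ s, ract σ m (f i) := by
  simp only [ract, ← LinearMap.coe_lTensorHom, map_sum, LinearMap.sum_apply]

theorem dualTensorHom_rTensor_ρ_of_mem_QSet [AddCommGroup M] [Module k M]
    {σ : RightComodule k C M} {q : M →ₗ[k] C →ₗ[k] k} (hq : q ∈ QSet σ) (x : M) (c : C) :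
    dualTensorHom k C C (q.rTensor C (σ.ρ x)) c = ract RightComodule.regular c (q x) := by
  rw [dualTensorHom_apply_eq_lid_rTensor, ← LinearMap.rTensor_comp_apply]
  exact hq x c

theorem stmt_3 {P : Type*} [AddCommGroup P] [Module k P] (σ : RightComodule k C P)
    (n : ℕ) (q : Fin n → (P →ₗ[k] C →ₗ[k] k)) (x : Fin n → P)
    (hq : ∀ i, q i ∈ QSet σ)
    (hsum : ∑ i, (q i) (x i) = (Coalgebra.counit (R := k) (A := C))) :
    -- `C` is a finitely generated projective `k`-module, with explicit dual basis
    -- `∑ⱼ fⱼ ⊗ cⱼ := ∑ᵢ qᵢ (xᵢ)₍₀₎ ⊗ (xᵢ)₍₁₎`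
    Module.Finite k C ∧ Module.Projective k C ∧
    dualTensorHom k C C (∑ i, ((q i).rTensor C) (σ.ρ (x i))) = LinearMap.id := by
  have hid : dualTensorHom k C C (∑ i, (q i).rTensor C (σ.ρ (x i))) = LinearMap.id := by
    ext c
    simp only [map_sum, LinearMap.sum_apply,
      dualTensorHom_rTensor_ρ_of_mem_QSet (hq _), ← ract_sum, hsum, ract_counit,
      LinearMap.id_apply]
  have hone : 1 ∈ LinearMap.range (dualTensorHom k C C) := ⟨_, hid⟩
  exact ⟨.of_one_mem_range_dualTensorHom hone, .of_one_mem_range_dualTensorHom hone, hid⟩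
end
end

section
/- Let C be a coalgebra over a commutative ring k and Σ a right C-comodule. Suppose there exist finitely many elements x₁,…,xₙ ∈ Σ and q₁,…,qₙ ∈ Q (with Q as above) such that the C-colinear endomorphism Σᵢ (xᵢ)₍₀₎ qᵢ(-)((xᵢ)₍₁₎) of Σ equals the identity of Σ. Then Σ is a finitely generated projective k-module. -/
/-! Expanding `ρ xᵢ = ∑ₚ mₚ ⊗ cₚ`, the hypothesis reads `y = ∑ qᵢ(y)(cₚ) • mₚ`: a finite dual basis
for `P`, so `P` is a retract of a finite free module. -/

open TensorProduct

noncomputable section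

variable {k C M N : Type*} [CommRing k] [AddCommGroup C] [Module k C] [Coalgebra k C]

theorem Module.finite_and_projective_of_sum_smul_eq_self {R P ι : Type*} [Semiring R]
    [AddCommMonoid P] [Module R P] (s : Finset ι) (v : ι → P) (f : ι → P →ₗ[R] R)
    (h : ∀ y, ∑ j ∈ s, f j y • v j = y) :
    Module.Finite R P ∧ Module.Projective R P := by
  let coord : P →ₗ[R] (s → R) := LinearMap.pi fun j => f j
  let comb : (s → R) →ₗ[R] P := Fintype.linearCombination R fun j => v j
  have hsplit : comb ∘ₗ coord = LinearMap.id := by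
    ext y
    simpa [coord, comb, Fintype.linearCombination_apply, ← Finset.sum_coe_sort s] using h y
  have hsurj : Function.Surjective comb := fun y => ⟨coord y, congr($hsplit y)⟩
  exact ⟨.of_surjective comb hsurj, .of_split coord comb hsplit⟩

theorem TensorProduct.exists_finset_rid_lTensor_eq_sum {R M N : Type*} [CommSemiring R]
    [AddCommMonoid M] [Module R M] [AddCommMonoid N] [Module R N] (t : M ⊗[R] N) :
    ∃ S : Finset (M × N), ∀ f : N →ₗ[R] R,
      TensorProduct.rid R M (f.lTensor M t) = ∑ p ∈ S, f p.2 • p.1 := by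
  obtain ⟨S, rfl⟩ := TensorProduct.exists_finset t
  exact ⟨S, fun f => by simp [map_sum]⟩

theorem stmt_4_general {P : Type*} [AddCommGroup P] [Module k P] (σ : RightComodule k C P)
    (n : ℕ) (x : Fin n → P) (q : Fin n → (P →ₗ[k] C →ₗ[k] k))
    -- the colinear endomorphism `y ↦ ∑ᵢ (xᵢ)₍₀₎ • (qᵢ y) (xᵢ)₍₁₎` is the identity of `P`
    (hid : ∀ y : P,
      ∑ i, (TensorProduct.rid k P) ((((q i) y).lTensor P) (σ.ρ (x i))) = y) :
    Module.Finite k P ∧ Module.Projective k P := by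
  choose S hS using fun i => TensorProduct.exists_finset_rid_lTensor_eq_sum (σ.ρ (x i))
  refine Module.finite_and_projective_of_sum_smul_eq_self (Finset.univ.sigma S)
    (fun j => j.2.1) (fun j => LinearMap.applyₗ j.2.2 ∘ₗ q j.1) fun y => ?_
  conv_rhs => rw [← hid y]
  simp [Finset.sum_sigma, hS]

theorem stmt_4 {P : Type*} [AddCommGroup P] [Module k P] (σ : RightComodule k C P)
    (n : ℕ) (x : Fin n → P) (q : Fin n → (P →ₗ[k] C →ₗ[k] k))
    (hq : ∀ i, q i ∈ QSet σ)
    -- the colinear endomorphism `y ↦ ∑ᵢ (xᵢ)₍₀₎ • (qᵢ y) (xᵢ)₍₁₎` is the identity of `P`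
    (hid : ∀ y : P,
      ∑ i, (TensorProduct.rid k P) ((((q i) y).lTensor P) (σ.ρ (x i))) = y) :
    Module.Finite k P ∧ Module.Projective k P :=
  stmt_4_general σ n x q hid
end
end

section
/- Let H be a Hopf algebra over a commutative ring k and let M be a right Hopf module over H (a right H-module and right H-comodule with ρ(m·h) = Σ m₍₀₎·h₍₁₎ ⊗ m₍₁₎h₍₂₎). Let M^coH = { m ∈ M | ρ(m) = m ⊗ 1 }. Then the map M^coH ⊗_k H → M, n ⊗ h ↦ n·h, is a bijection, with inverse m ↦ Σ m₍₀₎·S(m₍₁₎) ⊗ m₍₂₎ (Fundamental Theorem of Hopf modules). -/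
open TensorProduct

noncomputable section

section
open Coalgebra
set_option maxHeartbeats 1000000
set_option synthInstance.maxHeartbeats 200000
namespace Stmt11Aux


variable {k H : Type*} [CommRing k] [Ring H]

section ConvDef
variable [Bialgebra k H] {B : Type*} [Ring B] [Algebra k B]

/-- Convolution product. -/
def myconv (f g : H →ₗ[k] B) : H →ₗ[k] B :=
  LinearMap.mul' k B ∘ₗ TensorProduct.map f g ∘ₗ Coalgebra.comul

/-- Convolution unit. -/
def myunit : H →ₗ[k] B := Algebra.linearMap k B ∘ₗ Coalgebra.counit

lemma myconv_assoc (f g h : H →ₗ[k] B) :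
    myconv (myconv f g) h = myconv f (myconv g h) := by
  have h1 : TensorProduct.map (LinearMap.mul' k B ∘ₗ TensorProduct.map f g ∘ₗ comul) h
      = LinearMap.rTensor B (LinearMap.mul' k B) ∘ₗ
        TensorProduct.map (TensorProduct.map f g) h ∘ₗ
        LinearMap.rTensor H (comul (R:=k) (A:=H)) := by ext x y; simp
  have h2 : TensorProduct.map f (LinearMap.mul' k B ∘ₗ TensorProduct.map g h ∘ₗ comul)
      = LinearMap.lTensor B (LinearMap.mul' k B) ∘ₗ
        TensorProduct.map f (TensorProduct.map g h) ∘ₗ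
        LinearMap.lTensor H (comul (R:=k) (A:=H)) := by ext x y; simp
  have hnat : ∀ w : (H ⊗[k] H) ⊗[k] H,
      TensorProduct.map (TensorProduct.map f g) h w
      = (TensorProduct.assoc k B B B).symm
          (TensorProduct.map f (TensorProduct.map g h) (TensorProduct.assoc k H H H w)) := by
    intro w; induction w using TensorProduct.induction_on with
    | zero => simp
    | add x y hx hy => simp [hx, hy]
    | tmul x y =>
      induction x using TensorProduct.induction_on with
      | zero => simp
      | add u v hu hv => simp only [add_tmul, map_add, hu, hv]
      | tmul u v => simp
  have hmul : ∀ w : B ⊗[k] (B ⊗[k] B),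
      LinearMap.mul' k B (LinearMap.rTensor B (LinearMap.mul' k B)
        ((TensorProduct.assoc k B B B).symm w))
      = LinearMap.mul' k B (LinearMap.lTensor B (LinearMap.mul' k B) w) := by
    intro w; induction w using TensorProduct.induction_on with
    | zero => simp
    | add x y hx hy => simp [hx, hy]
    | tmul x y =>
      induction y using TensorProduct.induction_on with
      | zero => simp
      | add u v hu hv => simp only [tmul_add, map_add, hu, hv]
      | tmul u v => simp [mul_assoc]
  ext a
  simp only [myconv, h1, h2, LinearMap.comp_apply]
  rw [show (LinearMap.rTensor H (comul (R:=k) (A:=H))) (comul a)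
      = (TensorProduct.assoc k H H H).symm
          ((LinearMap.lTensor H (comul (R:=k) (A:=H))) (comul a)) from
    (Coalgebra.coassoc_symm_apply a).symm]
  rw [hnat, LinearEquiv.apply_symm_apply, hmul]

lemma myunit_conv (f : H →ₗ[k] B) : myconv myunit f = f := by
  ext a
  have : TensorProduct.map (myunit (B:=B)) f
      = TensorProduct.map (Algebra.linearMap k B) f ∘ₗ
        LinearMap.rTensor H (counit (R:=k) (A:=H)) := by ext x y; simp [myunit]
  simp only [myconv, LinearMap.comp_apply, this, Coalgebra.rTensor_counit_comul]
  simp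

lemma myconv_unit (f : H →ₗ[k] B) : myconv f myunit = f := by
  ext a
  have : TensorProduct.map f (myunit (B:=B))
      = TensorProduct.map f (Algebra.linearMap k B) ∘ₗ
        LinearMap.lTensor H (counit (R:=k) (A:=H)) := by ext x y; simp [myunit]
  simp only [myconv, LinearMap.comp_apply, this, Coalgebra.lTensor_counit_comul]
  simp [Algebra.algebraMap_eq_smul_one, mul_smul_comm]

lemma conv_inv_unique {f g e : H →ₗ[k] B} (h1 : myconv f e = myunit)
    (h2 : myconv e g = myunit) : f = g := by
  have := myconv_assoc f e g
  rw [h1, h2, myunit_conv, myconv_unit] at this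
  exact this.symm

end ConvDef

section Anti
variable [HopfAlgebra k H]

local notation "S" => (HopfAlgebra.antipode (R:=k) (A:=H))
local notation "Δ" => (Coalgebra.comul (R:=k) (A:=H))

/-- `(S ⊗ S) ∘ comm ∘ Δ`. -/
def Bm : H →ₗ[k] H ⊗[k] H :=
  TensorProduct.map S S ∘ₗ (TensorProduct.comm k H H).toLinearMap ∘ₗ Δ

lemma conv_comulS_comul : myconv (Δ ∘ₗ S) Δ = (myunit : H →ₗ[k] H ⊗[k] H) := by
  ext a
  set rp := Coalgebra.Repr.arbitrary k a with hrp
  simp only [myconv, myunit, LinearMap.comp_apply, ← rp.eq, map_sum]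
  have : ∀ i ∈ rp.index, (LinearMap.mul' k (H ⊗[k] H))
      (TensorProduct.map (Δ ∘ₗ S) Δ (rp.left i ⊗ₜ[k] rp.right i))
      = Δ ((S (rp.left i)) * rp.right i) := by
    intro i _
    simp [Bialgebra.comul_mul]
  rw [Finset.sum_congr rfl this, ← map_sum]
  rw [show (∑ i ∈ rp.index, (S (rp.left i)) * rp.right i) = algebraMap k H (counit a) from
    HopfAlgebra.sum_antipode_mul_eq_algebraMap_counit rp]
  simp

/-- Ψ(u ⊗ v) = u * S v -/
def Psi : H ⊗[k] H →ₗ[k] H := LinearMap.mul' k H ∘ₗ LinearMap.lTensor H S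

@[simp] lemma Psi_tmul (u v : H) : (Psi : H ⊗[k] H →ₗ[k] H) (u ⊗ₜ v) = u * S v := by
  simp [Psi]

lemma Psi_comul (y : H) : (Psi : H ⊗[k] H →ₗ[k] H) (Δ y) = algebraMap k H (counit y) := by
  simpa [Psi, LinearMap.comp_apply] using HopfAlgebra.mul_antipode_lTensor_comul_apply (R:=k) y

/-- Q2((x⊗y)⊗z) = Δ(x) * (S z ⊗ S y) -/
def Q2 : (H ⊗[k] H) ⊗[k] H →ₗ[k] H ⊗[k] H :=
  (LinearMap.mul' k (H ⊗[k] H) ∘ₗ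
    TensorProduct.map Δ (TensorProduct.map S S ∘ₗ (TensorProduct.comm k H H).toLinearMap)) ∘ₗ
    (TensorProduct.assoc k H H H).toLinearMap

@[simp] lemma Q2_tmul (x y z : H) :
    (Q2 : (H ⊗[k] H) ⊗[k] H →ₗ[k] H ⊗[k] H) ((x ⊗ₜ y) ⊗ₜ z) = Δ x * ((S z) ⊗ₜ (S y)) := by
  simp [Q2]

/-- G z (p ⊗ w) = (p * S z) ⊗ Ψ w -/
def Gz (z : H) : H ⊗[k] (H ⊗[k] H) →ₗ[k] H ⊗[k] H :=
  TensorProduct.map (LinearMap.mulRight k (S z)) Psi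

lemma Q2_comul_tmul (x z : H) :
    (Q2 : (H ⊗[k] H) ⊗[k] H →ₗ[k] H ⊗[k] H) ((Δ x) ⊗ₜ z) = (x * S z) ⊗ₜ 1 := by
  set rp := Coalgebra.Repr.arbitrary k x with hrp
  have step1 : (Q2 : (H ⊗[k] H) ⊗[k] H →ₗ[k] H ⊗[k] H) ((Δ x) ⊗ₜ z)
      = Gz z ((TensorProduct.assoc k H H H)
          ((LinearMap.rTensor H Δ) (Δ x))) := by
    rw [← rp.eq, sum_tmul]
    simp only [map_sum]
    refine Finset.sum_congr rfl fun i _ => ?_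
    set wp := Coalgebra.Repr.arbitrary k (rp.left i) with hwp
    rw [Q2_tmul, LinearMap.rTensor_tmul, ← wp.eq, sum_tmul]
    simp only [map_sum, assoc_tmul]
    rw [Finset.sum_mul]
    refine Finset.sum_congr rfl fun q _ => ?_
    simp [Gz, Algebra.TensorProduct.tmul_mul_tmul]
  rw [step1, Coalgebra.coassoc_apply, ← rp.eq]
  simp only [map_sum, LinearMap.lTensor_tmul]
  have h2 : ∀ i ∈ rp.index,
      (Gz z : H ⊗[k] (H ⊗[k] H) →ₗ[k] H ⊗[k] H) (rp.left i ⊗ₜ (Δ (rp.right i)))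
      = counit (R:=k) (rp.right i) • ((rp.left i * S z) ⊗ₜ (1:H)) := by
    intro i _
    rw [show (rp.left i) ⊗ₜ[k] (Δ (rp.right i))
        = (LinearMap.lTensor H Δ) ((rp.left i) ⊗ₜ (rp.right i)) by simp]
    simp only [Gz, LinearMap.lTensor_tmul, TensorProduct.map_tmul, Psi_comul,
      LinearMap.mulRight_apply, Algebra.algebraMap_eq_smul_one, tmul_smul]
  rw [Finset.sum_congr rfl h2]
  have h3 : (∑ i ∈ rp.index, counit (R:=k) (rp.right i) • rp.left i) = x := by
    have h := congrArg (TensorProduct.rid k H) (Coalgebra.sum_tmul_counit_eq rp)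
    rw [map_sum] at h
    simp only [TensorProduct.rid_tmul, one_smul] at h
    exact h
  calc ∑ i ∈ rp.index, counit (R:=k) (rp.right i) • ((rp.left i * S z) ⊗ₜ (1:H))
      = ∑ i ∈ rp.index, ((counit (R:=k) (rp.right i) • rp.left i) * S z) ⊗ₜ (1:H) := by
        simp only [smul_mul_assoc, smul_tmul']
    _ = ((∑ i ∈ rp.index, counit (R:=k) (rp.right i) • rp.left i) * S z) ⊗ₜ (1:H) := by
        rw [← sum_tmul, ← Finset.sum_mul]
    _ = (x * S z) ⊗ₜ (1:H) := by rw [h3]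

lemma conv_comul_Bm : myconv Δ (Bm (k:=k) (H:=H)) = myunit := by
  ext a
  set rp := Coalgebra.Repr.arbitrary k a with hrp
  have key : (myconv Δ (Bm (k:=k) (H:=H))) a
      = (LinearMap.mul' k (H ⊗[k] H) ∘ₗ
          TensorProduct.map Δ
            (TensorProduct.map S S ∘ₗ (TensorProduct.comm k H H).toLinearMap))
          ((LinearMap.lTensor H Δ) (Δ a)) := by
    simp only [myconv, LinearMap.comp_apply, ← rp.eq, map_sum]
    refine Finset.sum_congr rfl fun i _ => ?_
    simp [Bm]
  rw [key, ← Coalgebra.coassoc_apply]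
  have key2 : ∀ w : (H ⊗[k] H) ⊗[k] H,
      (LinearMap.mul' k (H ⊗[k] H) ∘ₗ
        TensorProduct.map Δ
          (TensorProduct.map S S ∘ₗ (TensorProduct.comm k H H).toLinearMap))
        ((TensorProduct.assoc k H H H) w) = Q2 w := fun w => rfl
  rw [key2, ← rp.eq]
  simp only [map_sum, LinearMap.rTensor_tmul]
  rw [Finset.sum_congr rfl fun i _ => Q2_comul_tmul (rp.left i) (rp.right i)]
  rw [← sum_tmul, HopfAlgebra.sum_mul_antipode_eq_algebraMap_counit rp]
  simp [myunit, Algebra.TensorProduct.algebraMap_apply]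

/-- The antipode is an anti-coalgebra morphism. -/
lemma comul_antipode' : Δ ∘ₗ S = Bm (k:=k) (H:=H) :=
  conv_inv_unique conv_comulS_comul conv_comul_Bm

lemma comul_antipode_apply (h : H) :
    Δ (S h) = TensorProduct.map S S ((TensorProduct.comm k H H) (Δ h)) :=
  LinearMap.congr_fun (comul_antipode' (k:=k) (H:=H)) h



lemma repr_counit_left {ι : Type*} (h : H) (rp : Coalgebra.Repr k h ι) :
    ∑ i ∈ rp.index, counit (R:=k) (rp.left i) • rp.right i = h := by
  have hh := congrArg (TensorProduct.lid k H) (Coalgebra.sum_counit_tmul_eq rp)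
  rw [map_sum] at hh
  simpa only [TensorProduct.lid_tmul, one_smul] using hh

variable {M : Type*} [AddCommGroup M] [Module k M]
variable (act : M ⊗[k] H →ₗ[k] M) (ρ : M →ₗ[k] M ⊗[k] H)

/-- `B` is the right-hand side of the Hopf module compatibility. -/
def Bmap : (M ⊗[k] H) ⊗[k] (H ⊗[k] H) →ₗ[k] M ⊗[k] H :=
  TensorProduct.map act (LinearMap.mul' k H) ∘ₗ
    (TensorProduct.tensorTensorTensorComm k M H H H).toLinearMap

@[simp] lemma Bmap_tmul (m : M) (x u v : H) :
    Bmap (k:=k) act ((m ⊗ₜ x) ⊗ₜ (u ⊗ₜ v)) = act (m ⊗ₜ u) ⊗ₜ (x * v) := by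
  simp [Bmap]

variable
  (hact_one : ∀ m : M, act (m ⊗ₜ[k] (1 : H)) = m)
  (hact_mul : ∀ (m : M) (g h : H),
    act (act (m ⊗ₜ[k] g) ⊗ₜ[k] h) = act (m ⊗ₜ[k] (g * h)))
  (hcoassoc : ∀ m : M,
    (TensorProduct.assoc k M H H) (ρ.rTensor H (ρ m)) =
      (Coalgebra.comul (R := k) (A := H)).lTensor M (ρ m))
  (hcounit : ∀ m : M,
    (TensorProduct.rid k M) ((Coalgebra.counit (R := k) (A := H)).lTensor M (ρ m)) = m)
  (hcompat : ρ ∘ₗ act =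
    TensorProduct.map act (LinearMap.mul' k H) ∘ₗ
      (TensorProduct.tensorTensorTensorComm k M H H H).toLinearMap ∘ₗ
        TensorProduct.map ρ Coalgebra.comul)

include hcompat in
/-- `ρ(n·h) = ∑ n·h₁ ⊗ h₂` for coinvariant `n`. -/
lemma rho_act_coinv (n : M) (h : H) (hn : ρ n = n ⊗ₜ 1) :
    ρ (act (n ⊗ₜ h)) =
      LinearMap.rTensor H (act ∘ₗ TensorProduct.mk k M H n) (Δ h) := by
  have h0 := LinearMap.congr_fun hcompat (n ⊗ₜ h)
  simp only [LinearMap.comp_apply, LinearEquiv.coe_coe, TensorProduct.map_tmul, hn] at h0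
  rw [h0]
  generalize (Δ h) = w
  induction w using TensorProduct.induction_on with
  | zero => simp
  | add x y hx hy => simp only [tmul_add, map_add, hx, hy]
  | tmul u v => simp

include hcompat hact_mul hact_one in
/-- `ν(n·h) = ε(h) • n` for coinvariant `n`. -/
lemma nu_act_coinv (n : M) (h : H) (hn : ρ n = n ⊗ₜ 1) :
    act ((LinearMap.lTensor M S) (ρ (act (n ⊗ₜ h)))) = counit (R:=k) h • n := by
  rw [rho_act_coinv act ρ hcompat n h hn]
  set rp := Coalgebra.Repr.arbitrary k h with hrp
  rw [← rp.eq]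
  simp only [map_sum, LinearMap.rTensor_tmul, LinearMap.lTensor_tmul,
    LinearMap.comp_apply, TensorProduct.mk_apply]
  rw [Finset.sum_congr rfl fun i _ => hact_mul n (rp.left i) (S (rp.right i))]
  rw [← map_sum, ← tmul_sum, HopfAlgebra.sum_mul_antipode_eq_smul rp]
  rw [tmul_smul, map_smul, hact_one]

/-- `G' m0 (x ⊗ (u ⊗ v)) = act (m0 ⊗ S v) ⊗ (x * S u)`. -/
def Gm (m0 : M) : H ⊗[k] (H ⊗[k] H) →ₗ[k] M ⊗[k] H :=
  Bmap (k:=k) act ∘ₗ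
    TensorProduct.map (TensorProduct.mk k M H m0)
      (TensorProduct.map S S ∘ₗ (TensorProduct.comm k H H).toLinearMap)

@[simp] lemma Gm_tmul (m0 : M) (x u v : H) :
    Gm (k:=k) act m0 (x ⊗ₜ (u ⊗ₜ v)) = act (m0 ⊗ₜ S v) ⊗ₜ (x * S u) := by
  simp [Gm]

lemma Gm_assoc_tmul (m0 : M) (w : H ⊗[k] H) (z : H) :
    Gm (k:=k) act m0 ((TensorProduct.assoc k H H H) (w ⊗ₜ z))
      = act (m0 ⊗ₜ S z) ⊗ₜ (Psi w) := by
  induction w using TensorProduct.induction_on with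
  | zero => simp
  | add x y hx hy => simp only [add_tmul, map_add, hx, hy, tmul_add]
  | tmul x y => simp

lemma Gm_comul (m0 : M) (x z : H) :
    Gm (k:=k) act m0 ((TensorProduct.assoc k H H H) ((Δ x) ⊗ₜ z))
      = counit (R:=k) x • (act (m0 ⊗ₜ S z) ⊗ₜ (1:H)) := by
  rw [Gm_assoc_tmul, Psi_comul, Algebra.algebraMap_eq_smul_one, tmul_smul]



/-- `Bm2` : apply `(S ⊗ S) ∘ comm` to the right factor, then `Bmap`. -/
def Bm2 : (M ⊗[k] H) ⊗[k] (H ⊗[k] H) →ₗ[k] M ⊗[k] H :=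
  Bmap (k:=k) act ∘ₗ LinearMap.lTensor (M ⊗[k] H)
    (TensorProduct.map S S ∘ₗ (TensorProduct.comm k H H).toLinearMap)

include hcompat hcoassoc in
/-- Coinvariance of `ν m = ∑ m₀ · S(m₁)`. -/
lemma coinv (m : M) :
    ρ (act ((LinearMap.lTensor M S) (ρ m)))
      = act ((LinearMap.lTensor M S) (ρ m)) ⊗ₜ[k] (1:H) := by
  have h0 := LinearMap.congr_fun hcompat ((LinearMap.lTensor M S) (ρ m))
  simp only [LinearMap.comp_apply, LinearEquiv.coe_coe] at h0
  -- step 1: rewrite via `comul_antipode`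
  have hstep1 : ∀ w : M ⊗[k] H,
      Bmap (k:=k) act (TensorProduct.map ρ Δ ((LinearMap.lTensor M S) w))
        = Bm2 (k:=k) act (TensorProduct.map ρ Δ w) := by
    intro w
    induction w using TensorProduct.induction_on with
    | zero => simp
    | add x y hx hy => simp only [map_add, hx, hy]
    | tmul m' h =>
      simp only [LinearMap.lTensor_tmul, TensorProduct.map_tmul, Bm2,
        LinearMap.comp_apply, LinearMap.id_apply]
      rw [comul_antipode_apply]
      rfl
  have h1 : ρ (act ((LinearMap.lTensor M S) (ρ m)))
      = Bm2 (k:=k) act (TensorProduct.map ρ Δ (ρ m)) := by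
    rw [← hstep1]; exact h0
  -- step 2: decompose `map ρ Δ` and use comodule coassociativity
  have hdec : ∀ w : M ⊗[k] H, TensorProduct.map ρ Δ w
      = (LinearMap.lTensor (M ⊗[k] H) Δ) ((LinearMap.rTensor H ρ) w) := by
    intro w
    induction w using TensorProduct.induction_on with
    | zero => simp
    | add x y hx hy => simp only [map_add, hx, hy]
    | tmul m' h => simp
  have hco : (LinearMap.rTensor H ρ) (ρ m)
      = (TensorProduct.assoc k M H H).symm ((LinearMap.lTensor M Δ) (ρ m)) := by
    rw [LinearEquiv.eq_symm_apply]
    exact hcoassoc m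
  rw [h1, hdec, hco]
  obtain ⟨s, hs⟩ := TensorProduct.exists_finset (ρ m)
  rw [hs]
  simp only [map_sum, LinearMap.lTensor_tmul]
  have key : ∀ p : M × H,
      Bm2 (k:=k) act ((LinearMap.lTensor (M ⊗[k] H) Δ)
        ((TensorProduct.assoc k M H H).symm (p.1 ⊗ₜ Δ (p.2))))
      = act (p.1 ⊗ₜ S (p.2)) ⊗ₜ (1:H) := by
    intro p
    set up := Coalgebra.Repr.arbitrary k p.2 with hup
    have e1 : Bm2 (k:=k) act ((LinearMap.lTensor (M ⊗[k] H) Δ)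
        ((TensorProduct.assoc k M H H).symm (p.1 ⊗ₜ Δ (p.2))))
        = Gm (k:=k) act p.1 ((LinearMap.lTensor H Δ) (Δ (p.2))) := by
      rw [← up.eq, tmul_sum]
      simp only [map_sum, assoc_symm_tmul, LinearMap.lTensor_tmul]
      refine Finset.sum_congr rfl fun j _ => ?_
      simp only [Bm2, Gm, LinearMap.comp_apply, LinearMap.lTensor_tmul,
        TensorProduct.map_tmul, TensorProduct.mk_apply]
    rw [e1, ← Coalgebra.coassoc_apply, ← up.eq]
    simp only [map_sum, LinearMap.rTensor_tmul]
    rw [Finset.sum_congr rfl fun j _ => Gm_comul (k:=k) act p.1 (up.left j) (up.right j)]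
    have e2 : ∀ j : up.ι, counit (R:=k) (up.left j) • (act (p.1 ⊗ₜ[k] S (up.right j)) ⊗ₜ[k] (1:H))
        = act (p.1 ⊗ₜ[k] S (counit (R:=k) (up.left j) • up.right j)) ⊗ₜ[k] (1:H) := by
      intro j
      rw [map_smul, tmul_smul, map_smul, smul_tmul']
    rw [Finset.sum_congr rfl fun j _ => e2 j]
    rw [← sum_tmul, ← map_sum, ← tmul_sum, ← map_sum, repr_counit_left (p.2) up]
  rw [Finset.sum_congr rfl fun p _ => key p, ← sum_tmul]

include hcoassoc hcounit hact_mul hact_one in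
/-- `∑ (m₀ · S(m₁)) · m₂ = m`. -/
lemma act_nu_rho (m : M) :
    act ((LinearMap.rTensor H (act ∘ₗ LinearMap.lTensor M S ∘ₗ ρ)) (ρ m)) = m := by
  have hsplit : (LinearMap.rTensor H (act ∘ₗ LinearMap.lTensor M S ∘ₗ ρ))
      = (LinearMap.rTensor H (act ∘ₗ LinearMap.lTensor M S)) ∘ₗ
        (LinearMap.rTensor H ρ) := by
    rw [← LinearMap.rTensor_comp]; rfl
  have hco : (LinearMap.rTensor H ρ) (ρ m)
      = (TensorProduct.assoc k M H H).symm ((LinearMap.lTensor M Δ) (ρ m)) := by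
    rw [LinearEquiv.eq_symm_apply]
    exact hcoassoc m
  rw [hsplit, LinearMap.comp_apply, hco]
  obtain ⟨s, hs⟩ := TensorProduct.exists_finset (ρ m)
  have hsum : ∀ p : M × H,
      act ((LinearMap.rTensor H (act ∘ₗ LinearMap.lTensor M S))
        ((TensorProduct.assoc k M H H).symm (p.1 ⊗ₜ Δ (p.2))))
      = counit (R:=k) (p.2) • p.1 := by
    intro p
    set up := Coalgebra.Repr.arbitrary k p.2 with hup
    rw [← up.eq, tmul_sum]
    simp only [map_sum, assoc_symm_tmul, LinearMap.rTensor_tmul,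
      LinearMap.comp_apply, LinearMap.lTensor_tmul]
    rw [Finset.sum_congr rfl fun j _ => hact_mul p.1 (S (up.left j)) (up.right j)]
    rw [← map_sum, ← tmul_sum, HopfAlgebra.sum_antipode_mul_eq_smul up]
    rw [tmul_smul, map_smul, hact_one]
  have hfin : ∑ p ∈ s, counit (R:=k) (p.2) • p.1 = m := by
    have h := hcounit m
    rw [hs] at h
    simp only [map_sum, LinearMap.lTensor_tmul, TensorProduct.rid_tmul] at h
    exact h
  rw [hs]
  simp only [map_sum, LinearMap.lTensor_tmul]
  rw [Finset.sum_congr rfl fun p _ => hsum p, hfin]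


end Anti
end Stmt11Aux

end

/-- Fundamental Theorem of Hopf modules. -/
theorem stmt_11 {k H M : Type*} [CommRing k] [Ring H] [HopfAlgebra k H]
    [AddCommGroup M] [Module k M]
    (act : M ⊗[k] H →ₗ[k] M) (ρ : M →ₗ[k] M ⊗[k] H)
    -- `M` is a right `H`-module
    (hact_one : ∀ m : M, act (m ⊗ₜ[k] (1 : H)) = m)
    (hact_mul : ∀ (m : M) (g h : H),
      act (act (m ⊗ₜ[k] g) ⊗ₜ[k] h) = act (m ⊗ₜ[k] (g * h)))
    -- `M` is a right `H`-comodule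
    (hcoassoc : ∀ m : M,
      (TensorProduct.assoc k M H H) (ρ.rTensor H (ρ m)) =
        (Coalgebra.comul (R := k) (A := H)).lTensor M (ρ m))
    (hcounit : ∀ m : M,
      (TensorProduct.rid k M) ((Coalgebra.counit (R := k) (A := H)).lTensor M (ρ m)) = m)
    -- Hopf module compatibility: `ρ (m · h) = ∑ m₍₀₎ · h₍₁₎ ⊗ m₍₁₎ h₍₂₎`
    (hcompat : ρ ∘ₗ act =
      TensorProduct.map act (LinearMap.mul' k H) ∘ₗ
        (TensorProduct.tensorTensorTensorComm k M H H H).toLinearMap ∘ₗ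
          TensorProduct.map ρ Coalgebra.comul) :
    ∀ Mco : Submodule k M, Mco = LinearMap.ker (ρ - (TensorProduct.mk k M H).flip 1) →
    ∀ θ : Mco ⊗[k] H →ₗ[k] M, θ = act ∘ₗ (Mco.subtype.rTensor H) →
    ∀ ν : M →ₗ[k] M, ν = act ∘ₗ ((HopfAlgebra.antipode (R := k)).lTensor M) ∘ₗ ρ →
      -- `n ⊗ h ↦ n · h` is bijective
      Function.Bijective θ ∧
      -- `∑ m₍₀₎ · S(m₍₁₎)` is coinvariant
      (∀ m : M, ν m ∈ Mco) ∧
      -- the inverse is `m ↦ ∑ m₍₀₎ · S(m₍₁₎) ⊗ m₍₂₎`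
      (∀ w : Mco ⊗[k] H, (ν.rTensor H) (ρ (θ w)) = (Mco.subtype.rTensor H) w) ∧
      (∀ m : M, ∃ w : Mco ⊗[k] H,
        (Mco.subtype.rTensor H) w = (ν.rTensor H) (ρ m) ∧ θ w = m) := by
  intro Mco hMco θ hθ ν hν
  have hmem : ∀ x : M, x ∈ Mco ↔ ρ x = x ⊗ₜ[k] (1:H) := by
    intro x
    rw [hMco, LinearMap.mem_ker, LinearMap.sub_apply, sub_eq_zero]
    rfl
  have hνapp : ∀ m : M, ν m =
      act ((LinearMap.lTensor M (HopfAlgebra.antipode (R:=k))) (ρ m)) := by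
    intro m; rw [hν]; rfl
  have hK1 : ∀ m : M, ρ (ν m) = ν m ⊗ₜ[k] (1:H) := by
    intro m
    rw [hνapp]
    exact Stmt11Aux.coinv act ρ hcoassoc hcompat m
  have hco : ∀ m : M, ν m ∈ Mco := fun m => (hmem _).2 (hK1 m)
  set ν' : M →ₗ[k] Mco := ν.codRestrict Mco hco with hν'
  set φ : M →ₗ[k] Mco ⊗[k] H := (ν'.rTensor H) ∘ₗ ρ with hφ
  have hsubT : ∀ w : M ⊗[k] H,
      (Mco.subtype.rTensor H) ((ν'.rTensor H) w) = (ν.rTensor H) w := by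
    intro w
    rw [← LinearMap.comp_apply, ← LinearMap.rTensor_comp,
      LinearMap.subtype_comp_codRestrict]
  have hK2 : ∀ m : M, act ((ν.rTensor H) (ρ m)) = m := by
    intro m
    rw [hν]
    exact Stmt11Aux.act_nu_rho act ρ hact_one hact_mul hcoassoc hcounit m
  have hpart4 : ∀ m : M, ∃ w : Mco ⊗[k] H,
      (Mco.subtype.rTensor H) w = (ν.rTensor H) (ρ m) ∧ θ w = m := by
    intro m
    refine ⟨φ m, ?_, ?_⟩
    · rw [hφ]; exact hsubT (ρ m)
    · rw [hθ, LinearMap.comp_apply, hφ, LinearMap.comp_apply, hsubT]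
      exact hK2 m
  -- the key pure-tensor computation
  have hpure : ∀ (n : Mco) (h : H),
      (ν'.rTensor H) (ρ (act ((n : M) ⊗ₜ[k] h))) = n ⊗ₜ[k] h := by
    intro n h
    have hn : ρ (n : M) = (n : M) ⊗ₜ[k] (1:H) := (hmem _).1 n.2
    rw [Stmt11Aux.rho_act_coinv act ρ hcompat (n : M) h hn]
    set rp := Coalgebra.Repr.arbitrary k h with hrp
    rw [← rp.eq]
    simp only [map_sum, LinearMap.rTensor_tmul, LinearMap.comp_apply,
      TensorProduct.mk_apply]
    have hterm : ∀ j : rp.ι, ν' (act ((n : M) ⊗ₜ[k] rp.left j))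
        = Coalgebra.counit (R:=k) (rp.left j) • n := by
      intro j
      apply Subtype.ext
      rw [LinearMap.codRestrict_apply]
      simp only [SetLike.val_smul]
      rw [hνapp]
      exact Stmt11Aux.nu_act_coinv act ρ hact_one hact_mul hcompat (n : M)
        (rp.left j) hn
    rw [Finset.sum_congr rfl fun j _ => congrArg (· ⊗ₜ[k] rp.right j) (hterm j)]
    have : ∀ j : rp.ι,
        (Coalgebra.counit (R:=k) (rp.left j) • n) ⊗ₜ[k] rp.right j
          = n ⊗ₜ[k] (Coalgebra.counit (R:=k) (rp.left j) • rp.right j) := by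
      intro j; rw [smul_tmul]
    rw [Finset.sum_congr rfl fun j _ => this j, ← tmul_sum,
      Stmt11Aux.repr_counit_left h rp]
  have hLI : ∀ w : Mco ⊗[k] H, φ (θ w) = w := by
    intro w
    induction w using TensorProduct.induction_on with
    | zero => simp
    | add x y hx hy => rw [map_add, map_add, hx, hy]
    | tmul n h =>
      rw [hθ, hφ]
      simp only [LinearMap.comp_apply, LinearMap.rTensor_tmul,
        Submodule.coe_subtype]
      exact hpure n h
  have hK3 : ∀ w : Mco ⊗[k] H,
      (ν.rTensor H) (ρ (θ w)) = (Mco.subtype.rTensor H) w := by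
    intro w
    have := congrArg (Mco.subtype.rTensor H) (hLI w)
    rw [hφ, LinearMap.comp_apply, hsubT] at this
    rw [hθ] at this ⊢
    exact this
  refine ⟨⟨Function.LeftInverse.injective hLI, fun m => (hpart4 m).imp fun w hw => hw.2⟩,
    hco, hK3, hpart4⟩
end
end

section
/- Let G be a finite group with an idempotent partial action on a k-algebra A, given by central idempotents {e_σ}_{σ∈G} and isomorphisms of ideals α_σ : A e_{σ⁻¹} → A e_σ, satisfying e_1 = 1, α_1 = id, and α_σ(α_τ(a e_{τ⁻¹}) e_{σ⁻¹}) = α_{στ}(a e_{τ⁻¹σ⁻¹}) e_σ for all σ, τ ∈ G and a ∈ A. Then in the A-bimodule C = ⊕_{σ∈G} A e_σ with bimodule structure a₁(a ν_σ)a₂ = a₁ a α_σ(a₂ e_{σ⁻¹}) ν_σ, coproduct Δ(a ν_σ) = Σ_{τ∈G} a ν_τ ⊗_A ν_{τ⁻¹σ} and counit ε(a ν_σ) = a δ_{σ,1}, the element g = Σ_{σ∈G} ν_σ is grouplike: Δ(g) = g ⊗_A g and ε(g) = 1. -/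
open TensorProduct

noncomputable section

set_option synthInstance.maxHeartbeats 1000000
set_option maxHeartbeats 1000000

variable {k A : Type*} [CommRing k] [Ring A] [Algebra k A]
variable {G : Type*} [Group G] [Fintype G] [DecidableEq G]

/-- The underlying `k`-module `⊕_{σ ∈ G} A e_σ` of the coring associated to an idempotent
partial action, realised as the families `f : G → A` with `f σ ∈ A e_σ` for all `σ`. -/
def Csub (e : G → A) : Submodule k (G → A) where
  carrier := {f | ∀ σ, f σ * e σ = f σ}
  add_mem' := by intro f g hf hg σ; simp only [Pi.add_apply, add_mul, hf σ, hg σ]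
  zero_mem' := by intro σ; simp
  smul_mem' := by intro c f hf σ; simp only [Pi.smul_apply, smul_mul_assoc, hf σ]

/-- The element `ν_σ`, equal to `e_σ` in the `σ`-component and `0` elsewhere. -/
def nuEl (e : G → A) (he : ∀ σ, e σ * e σ = e σ) (σ : G) : Csub (k := k) e :=
  ⟨fun τ => if τ = σ then e σ else 0, by
    intro τ
    by_cases h : τ = σ
    · subst h; simp [he τ]
    · simp [h]⟩

/-- The grouplike element `∑_{σ ∈ G} ν_σ`, i.e. the family `σ ↦ e_σ`. -/
def glike (e : G → A) (he : ∀ σ, e σ * e σ = e σ) : Csub (k := k) e :=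
  ⟨fun σ => e σ, fun σ => he σ⟩

/-- The left `A`-action on `C`: `(a · f) σ = a * f σ`. -/
def lactC (e : G → A) (a : A) (c : Csub (k := k) e) : Csub (k := k) e :=
  ⟨fun σ => a * (c : G → A) σ, by intro σ; rw [mul_assoc, c.2 σ]⟩

/-- The right `A`-action on `C`: `(f · a) σ = f σ * α_σ (a e_{σ⁻¹})`. -/
def ractC (e : G → A) (α : G → A →ₗ[k] A) (hα : ∀ σ a, α σ a * e σ = α σ a)
    (c : Csub (k := k) e) (a : A) : Csub (k := k) e :=
  ⟨fun σ => (c : G → A) σ * α σ (a * e σ⁻¹), by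
    intro σ; rw [mul_assoc, hα σ (a * e σ⁻¹)]⟩

/-- The `A`-balancing relations defining `C ⊗_A C` inside `C ⊗_k C`. -/
def balC (e : G → A) (α : G → A →ₗ[k] A) (hα : ∀ σ a, α σ a * e σ = α σ a) :
    Submodule k ((Csub (k := k) e) ⊗[k] (Csub (k := k) e)) :=
  Submodule.span k {z | ∃ (c c' : Csub (k := k) e) (a : A),
    z = (ractC e α hα c a) ⊗ₜ[k] c' - c ⊗ₜ[k] (lactC e a c')}

/-! Reindexing `Δ(g)` by `ρ = τ⁻¹σ` gives `∑_{τ,ρ} e_{τρ} ν_τ ⊗_A ν_ρ`. By the cocycle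
condition at `a = 1`, `e_{τρ} ν_τ = ν_τ e_ρ` in `C`, so the balancing relation moves `e_ρ` to
the right factor, where `e_ρ ν_ρ = ν_ρ`; what remains is `∑_{τ,ρ} ν_τ ⊗_A ν_ρ = g ⊗_A g`. -/

section

variable (e : G → A) (he_idem : ∀ σ, e σ * e σ = e σ)

omit [Group G] [Fintype G] in
@[simp]
lemma coe_nuEl_apply (σ τ : G) :
    ((nuEl (k := k) e he_idem σ : Csub (k := k) e) : G → A) τ = if τ = σ then e σ else 0 :=
  rfl

omit [Group G] in
lemma glike_eq_sum_nuEl : glike (k := k) e he_idem = ∑ σ : G, nuEl e he_idem σ := by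
  ext τ
  rw [Submodule.coe_sum, Finset.sum_apply]
  simp [glike]

omit [Group G] [Fintype G] in
lemma lactC_nuEl_self (ρ : G) :
    lactC (k := k) e (e ρ) (nuEl e he_idem ρ) = nuEl e he_idem ρ := by
  ext σ
  by_cases h : σ = ρ
  · subst h; simp [lactC, he_idem]
  · simp [lactC, h]

omit [Fintype G] [DecidableEq G] in
lemma mk_ractC_tmul (α : G → A →ₗ[k] A) (hα_range : ∀ σ a, α σ a * e σ = α σ a)
    (c c' : Csub (k := k) e) (a : A) :
    Submodule.Quotient.mk (p := balC e α hα_range) (ractC e α hα_range c a ⊗ₜ[k] c') =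
      Submodule.Quotient.mk (p := balC e α hα_range) (c ⊗ₜ[k] lactC e a c') :=
  (Submodule.Quotient.eq _).2 (Submodule.subset_span ⟨c, c', a, rfl⟩)

omit [Fintype G] [DecidableEq G] in
lemma apply_idem_mul_idem_inv (α : G → A →ₗ[k] A)
    (hα_dom : ∀ σ a, α σ (a * e σ⁻¹) = α σ a) (hα_unit : ∀ σ, α σ (e σ⁻¹) = e σ)
    (hcoc : ∀ σ τ a, α σ (α τ a * e σ⁻¹) = α (σ * τ) (a * e (σ * τ)⁻¹) * e σ) (τ ρ : G) :
    α τ (e ρ * e τ⁻¹) = e (τ * ρ) * e τ := by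
  have hρ : α ρ 1 = e ρ := by rw [← hα_dom ρ 1, one_mul, hα_unit]
  simpa only [hρ, one_mul, hα_unit] using hcoc τ ρ 1

omit [Fintype G] in
lemma lactC_nuEl_eq_ractC (he_central : ∀ σ a, e σ * a = a * e σ) (α : G → A →ₗ[k] A)
    (hα_range : ∀ σ a, α σ a * e σ = α σ a)
    (hα_move : ∀ τ ρ, α τ (e ρ * e τ⁻¹) = e (τ * ρ) * e τ) (τ ρ : G) :
    lactC e (e (τ * ρ)) (nuEl e he_idem τ) =
      ractC e α hα_range (nuEl e he_idem τ) (e ρ) := by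
  ext σ
  by_cases h : σ = τ
  · subst h
    simp only [lactC, ractC, coe_nuEl_apply, if_true, hα_move]
    rw [← mul_assoc, he_central σ, mul_assoc, he_idem]
  · simp [lactC, ractC, h]

end

theorem stmt_17_general (e : G → A) (α : G → A →ₗ[k] A)
    (he_idem : ∀ σ, e σ * e σ = e σ)
    (he_central : ∀ σ a, e σ * a = a * e σ)
    (he_one : e 1 = 1)
    (hα_range : ∀ σ a, α σ a * e σ = α σ a)
    (hα_dom : ∀ σ a, α σ (a * e σ⁻¹) = α σ a)
    (hα_unit : ∀ σ, α σ (e σ⁻¹) = e σ)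
    (hcoc : ∀ σ τ a, α σ (α τ a * e σ⁻¹) = α (σ * τ) (a * e (σ * τ)⁻¹) * e σ) :
    ((∑ σ : G, ∑ τ : G,
        Submodule.Quotient.mk (p := balC (k := k) e α hα_range)
          ((lactC e (e σ) (nuEl e he_idem τ)) ⊗ₜ[k] (nuEl e he_idem (τ⁻¹ * σ)))) =
      Submodule.Quotient.mk (p := balC (k := k) e α hα_range)
        ((glike e he_idem) ⊗ₜ[k] (glike e he_idem))) ∧
    -- … and `ε(g) = 1`
    ((glike (k := k) e he_idem : G → A) 1 = 1) := by
  refine ⟨?_, he_one⟩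
  have hbalance : ∀ τ ρ : G,
      Submodule.Quotient.mk (p := balC (k := k) e α hα_range)
        (lactC e (e (τ * ρ)) (nuEl e he_idem τ) ⊗ₜ[k] nuEl e he_idem ρ) =
      Submodule.Quotient.mk (p := balC (k := k) e α hα_range)
        (nuEl e he_idem τ ⊗ₜ[k] nuEl e he_idem ρ) := fun τ ρ => by
    rw [lactC_nuEl_eq_ractC e he_idem he_central α hα_range
      (apply_idem_mul_idem_inv e α hα_dom hα_unit hcoc), mk_ractC_tmul, lactC_nuEl_self]
  have hreindex : ∀ τ : G, ∑ σ : G,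
      Submodule.Quotient.mk (p := balC (k := k) e α hα_range)
        (lactC e (e σ) (nuEl e he_idem τ) ⊗ₜ[k] nuEl e he_idem (τ⁻¹ * σ)) =
      ∑ ρ : G, Submodule.Quotient.mk (p := balC (k := k) e α hα_range)
        (lactC e (e (τ * ρ)) (nuEl e he_idem τ) ⊗ₜ[k] nuEl e he_idem ρ) := fun τ =>
    Fintype.sum_equiv (Equiv.mulLeft τ⁻¹) _ _ fun σ => by simp
  have hsplit : glike (k := k) e he_idem ⊗ₜ[k] glike (k := k) e he_idem =
      ∑ τ : G, ∑ ρ : G, nuEl (k := k) e he_idem τ ⊗ₜ[k] nuEl e he_idem ρ := by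
    simp only [glike_eq_sum_nuEl, TensorProduct.sum_tmul, TensorProduct.tmul_sum]
    exact Finset.sum_comm
  rw [Finset.sum_comm, hsplit, ← Submodule.mkQ_apply]
  simp only [hreindex, hbalance, map_sum, Submodule.mkQ_apply]

/-- For an idempotent partial action of a finite group `G` on `A`, the element
`g = ∑_σ ν_σ` of the associated `A`-coring `C = ⊕_σ A e_σ` is grouplike:
`Δ(g) = g ⊗_A g` (where `Δ(a ν_σ) = ∑_τ a ν_τ ⊗_A ν_{τ⁻¹σ}`) and `ε(g) = 1`
(where `ε(a ν_σ) = a δ_{σ,1}`, i.e. `ε f = f 1`). -/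
theorem stmt_17 (e : G → A) (α : G → A →ₗ[k] A)
    (he_idem : ∀ σ, e σ * e σ = e σ)
    (he_central : ∀ σ a, e σ * a = a * e σ)
    (he_one : e 1 = 1)
    (hα_range : ∀ σ a, α σ a * e σ = α σ a)
    (hα_dom : ∀ σ a, α σ (a * e σ⁻¹) = α σ a)
    (hα_one : ∀ a, α 1 a = a)
    (hα_mul : ∀ σ a b, α σ (a * b * e σ⁻¹) = α σ a * α σ b)
    (hα_unit : ∀ σ, α σ (e σ⁻¹) = e σ)
    (hα_inv : ∀ σ a, α σ⁻¹ (α σ a) = a * e σ⁻¹)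
    (hcoc : ∀ σ τ a, α σ (α τ a * e σ⁻¹) = α (σ * τ) (a * e (σ * τ)⁻¹) * e σ) :
    -- `Δ(g) = g ⊗_A g` …
    ((∑ σ : G, ∑ τ : G,
        Submodule.Quotient.mk (p := balC (k := k) e α hα_range)
          ((lactC e (e σ) (nuEl e he_idem τ)) ⊗ₜ[k] (nuEl e he_idem (τ⁻¹ * σ)))) =
      Submodule.Quotient.mk (p := balC (k := k) e α hα_range)
        ((glike e he_idem) ⊗ₜ[k] (glike e he_idem))) ∧
    -- … and `ε(g) = 1`
    ((glike (k := k) e he_idem : G → A) 1 = 1) :=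
  stmt_17_general e α he_idem he_central he_one hα_range hα_dom hα_unit hcoc
end
end

section
/- Let C be a coalgebra over a commutative ring k which is finitely generated and projective as a k-module, with dual basis {cᵢ} ⊂ C, {fᵢ} ⊂ C* (so Σᵢ fᵢ(c) cᵢ = c for all c). Then C* is a right C-comodule with coaction f ↦ Σᵢ f * fᵢ ⊗ cᵢ (where * is the convolution product), and for any right C-comodule Σ the k-module Q = { q : Σ → C* | Σ q(x₍₀₎)(c) x₍₁₎ = Σ c₍₁₎ q(x)(c₍₂₎) } coincides with Hom^C(Σ, C*), the set of right C-colinear maps Σ → C*. -/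
/-!
Write `slice g : M ⊗ C → M` for contraction of the `C`-factor with `g ∈ C*`. A tensor is
determined by its slices against a dual basis, and the slices of `ρ f = ∑ᵢ f * fᵢ ⊗ cᵢ` are
`slice g (ρ f) = f * g`. This characterisation makes `ρ` independent of the dual basis, and
slicing against the dual basis `fᵢ ⊗ fⱼ` of `C ⊗ C` reduces coassociativity to associativity
of the convolution product, counitality to `f * ε = f`. Likewise `q` is colinear iff
`slice g (∑ q x₍₀₎ ⊗ x₍₁₎) = q x * g` for all `g`; evaluated at `c`, and since the `fᵢ`
separate points of `C`, this is the identity defining `Q`.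
-/

open TensorProduct

noncomputable section

variable {k C M N : Type*} [CommRing k] [AddCommGroup C] [Module k C] [Coalgebra k C]

/-- The `*C`-type convolution product on the dual of `C`:
`(f * g) c = ∑ g c₍₁₎ * f c₍₂₎`, i.e. `(f * g)(c) = g(∑ c₍₁₎ f(c₍₂₎))`. -/
def starMul (f g : C →ₗ[k] k) : C →ₗ[k] k := conv g f

open WithConv

section Slice

variable {V W : Type*} [AddCommGroup M] [Module k M] [AddCommGroup N] [Module k N]
  [AddCommGroup V] [Module k V] [AddCommGroup W] [Module k W]

def slice (g : V →ₗ[k] k) : M ⊗[k] V →ₗ[k] M :=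
  (TensorProduct.rid k M).toLinearMap ∘ₗ g.lTensor M

@[simp] lemma slice_tmul (g : V →ₗ[k] k) (m : M) (v : V) : slice g (m ⊗ₜ[k] v) = g v • m := by
  simp [slice]

lemma slice_rTensor (g : V →ₗ[k] k) (ψ : M →ₗ[k] N) (t : M ⊗[k] V) :
    slice g (ψ.rTensor V t) = ψ (slice g t) := by
  induction t using TensorProduct.induction_on with
  | zero => simp
  | tmul m v => simp
  | add x y hx hy => simp only [map_add, hx, hy]

lemma slice_lTensor (g : W →ₗ[k] k) (ψ : V →ₗ[k] W) (t : M ⊗[k] V) :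
    slice g (ψ.lTensor M t) = slice (g ∘ₗ ψ) t := by
  simp [slice, LinearMap.lTensor_comp_apply]

lemma slice_eq_apply_lid (g : V →ₗ[k] k) (t : k ⊗[k] V) :
    slice g t = g (TensorProduct.lid k V t) := by
  induction t using TensorProduct.induction_on with
  | zero => simp
  | tmul a v => simp [mul_comm]
  | add x y hx hy => simp only [map_add, hx, hy]

lemma slice_rTensor_apply (g : V →ₗ[k] k) (q : M →ₗ[k] W →ₗ[k] k) (t : M ⊗[k] V) (w : W) :
    slice g (q.rTensor V t) w =
      g (TensorProduct.lid k V ((LinearMap.applyₗ w ∘ₗ q).rTensor V t)) := by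
  rw [slice_rTensor, ← slice_eq_apply_lid, slice_rTensor]
  rfl

lemma lid_map_eq_apply_slice (g : V →ₗ[k] k) (f : W →ₗ[k] k) (t : V ⊗[k] W) :
    TensorProduct.lid k k (TensorProduct.map g f t) = g (slice f t) := by
  induction t using TensorProduct.induction_on with
  | zero => simp
  | tmul v w => simp [mul_comm]
  | add x y hx hy => simp only [map_add, hx, hy]

lemma slice_dualDistrib_assoc (g : V →ₗ[k] k) (h : W →ₗ[k] k) (t : (M ⊗[k] V) ⊗[k] W) :
    slice (dualDistrib k V W (g ⊗ₜ h)) (TensorProduct.assoc k M V W t) =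
      slice h ((slice g).rTensor W t) := by
  have : slice (M := M) (dualDistrib k V W (g ⊗ₜ h)) ∘ₗ (TensorProduct.assoc k M V W).toLinearMap
      = slice h ∘ₗ (slice g).rTensor W :=
    TensorProduct.ext_threefold fun m v w => by
      simp [dualDistrib_apply, mul_smul, smul_comm (g v)]
  exact LinearMap.congr_fun this t

end Slice

section DualBasis

variable {V W ι κ : Type*} [AddCommGroup M] [Module k M] [AddCommGroup V] [Module k V]
  [AddCommGroup W] [Module k W] [Fintype ι] [Fintype κ]
  {b : ι → V} {β : ι → V →ₗ[k] k}

lemma sum_slice_tmul (hb : ∀ v, ∑ i, β i v • b i = v) (t : M ⊗[k] V) :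
    ∑ i, slice (β i) t ⊗ₜ[k] b i = t := by
  induction t using TensorProduct.induction_on with
  | zero => simp
  | tmul m v =>
    conv_rhs => rw [← hb v]
    simp [TensorProduct.tmul_sum, TensorProduct.smul_tmul]
  | add x y hx hy => simp only [map_add, TensorProduct.add_tmul, Finset.sum_add_distrib, hx, hy]

lemma eq_of_slice_eq (hb : ∀ v, ∑ i, β i v • b i = v) {t₁ t₂ : M ⊗[k] V}
    (h : ∀ i, slice (β i) t₁ = slice (β i) t₂) : t₁ = t₂ := by
  rw [← sum_slice_tmul hb t₁, ← sum_slice_tmul hb t₂]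
  simp only [h]

lemma eq_of_dual_eq (hb : ∀ v, ∑ i, β i v • b i = v) {v w : V} (h : ∀ i, β i v = β i w) :
    v = w := by
  rw [← hb v, ← hb w]
  simp only [h]

lemma sum_apply_smul_dual (hb : ∀ v, ∑ i, β i v • b i = v) (g : V →ₗ[k] k) :
    ∑ i, g (b i) • β i = g := by
  ext v
  conv_rhs => rw [← hb v]
  simp [mul_comm]

lemma sum_dualDistrib_smul_tmul (hb : ∀ v, ∑ i, β i v • b i = v) {c : κ → W}
    {γ : κ → W →ₗ[k] k} (hc : ∀ w, ∑ j, γ j w • c j = w) (t : V ⊗[k] W) :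
    ∑ p : ι × κ, dualDistrib k V W (β p.1 ⊗ₜ γ p.2) t • (b p.1 ⊗ₜ[k] c p.2) = t := by
  induction t using TensorProduct.induction_on with
  | zero => simp
  | tmul v w =>
    conv_rhs => rw [← hb v, ← hc w]
    simp only [Fintype.sum_prod_type, dualDistrib_apply, TensorProduct.sum_tmul,
      TensorProduct.tmul_sum, TensorProduct.smul_tmul_smul]
    exact Finset.sum_comm
  | add x y hx hy => simp only [map_add, add_smul, Finset.sum_add_distrib, hx, hy]

end DualBasis

lemma conv_eq_ofConv_mul (f g : C →ₗ[k] k) : conv f g = (toConv f * toConv g).ofConv := by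
  have hlid : (TensorProduct.lid k k).toLinearMap = LinearMap.mul' k k :=
    TensorProduct.ext' fun _ _ => by simp
  rw [LinearMap.convMul_def, ofConv_toConv, conv, hlid]

lemma starMul_eq_ofConv_mul (f g : C →ₗ[k] k) : starMul f g = (toConv g * toConv f).ofConv :=
  conv_eq_ofConv_mul g f

lemma starMul_apply (f g : C →ₗ[k] k) (c : C) :
    starMul f g c = g (slice f (Coalgebra.comul c)) :=
  lid_map_eq_apply_slice g f _

lemma starMul_assoc (f g h : C →ₗ[k] k) : starMul (starMul f g) h = starMul f (starMul g h) := by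
  simp only [starMul_eq_ofConv_mul, toConv_ofConv, mul_assoc]

lemma starMul_counit (f : C →ₗ[k] k) : starMul f Coalgebra.counit = f := by
  rw [starMul_eq_ofConv_mul]
  exact congrArg ofConv (one_mul (toConv f))

section DualCoaction

variable {ι : Type*} [Fintype ι] {b : ι → C} {β : ι → C →ₗ[k] k}

variable (b β) in
def dualCoaction : (C →ₗ[k] k) →ₗ[k] (C →ₗ[k] k) ⊗[k] C where
  toFun f := ∑ i, starMul f (β i) ⊗ₜ[k] b i
  map_add' f f' := by
    simp only [starMul_eq_ofConv_mul, toConv_add, mul_add, ofConv_add, TensorProduct.add_tmul,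
      Finset.sum_add_distrib]
  map_smul' a f := by
    simp only [starMul_eq_ofConv_mul, toConv_smul, mul_smul_comm, ofConv_smul,
      TensorProduct.smul_tmul', Finset.smul_sum, RingHom.id_apply]

lemma slice_dualCoaction (hb : ∀ c, ∑ i, β i c • b i = c) (f g : C →ₗ[k] k) :
    slice g (dualCoaction b β f) = starMul f g := by
  calc slice g (dualCoaction b β f)
      = (toConv (∑ i, g (b i) • β i) * toConv f).ofConv := by
        simp [dualCoaction, starMul_eq_ofConv_mul, Finset.sum_mul, smul_mul_assoc]
    _ = starMul f g := by rw [sum_apply_smul_dual hb, starMul_eq_ofConv_mul]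

lemma dualCoaction_eq_sum (hb : ∀ c, ∑ i, β i c • b i = c) {κ : Type*} [Fintype κ]
    {b' : κ → C} {β' : κ → C →ₗ[k] k} (hb' : ∀ c, ∑ j, β' j c • b' j = c) (f : C →ₗ[k] k) :
    dualCoaction b β f = ∑ j, starMul f (β' j) ⊗ₜ[k] b' j := by
  conv_lhs => rw [← sum_slice_tmul hb' (dualCoaction b β f)]
  simp only [slice_dualCoaction hb]

lemma dualCoaction_coassoc (hb : ∀ c, ∑ i, β i c • b i = c) (f : C →ₗ[k] k) :
    TensorProduct.assoc k (C →ₗ[k] k) C C ((dualCoaction b β).rTensor C (dualCoaction b β f)) =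
      (Coalgebra.comul (R := k) (A := C)).lTensor _ (dualCoaction b β f) := by
  refine eq_of_slice_eq (sum_dualDistrib_smul_tmul hb hb) fun p => ?_
  have hcomul :
      dualDistrib k C C (β p.1 ⊗ₜ β p.2) ∘ₗ Coalgebra.comul = starMul (β p.2) (β p.1) :=
    rfl
  rw [slice_dualDistrib_assoc, ← LinearMap.rTensor_comp_apply, slice_lTensor, hcomul,
    slice_rTensor, slice_dualCoaction hb, LinearMap.comp_apply, slice_dualCoaction hb,
    slice_dualCoaction hb, starMul_assoc]

lemma dualCoaction_counit (hb : ∀ c, ∑ i, β i c • b i = c) (f : C →ₗ[k] k) :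
    TensorProduct.rid k (C →ₗ[k] k)
      ((Coalgebra.counit (R := k) (A := C)).lTensor _ (dualCoaction b β f)) = f :=
  (slice_dualCoaction hb f _).trans (starMul_counit f)

variable (b β) in
def dualComodule (hb : ∀ c, ∑ i, β i c • b i = c) : RightComodule k C (C →ₗ[k] k) where
  ρ := dualCoaction b β
  coassoc := dualCoaction_coassoc hb
  counit_comp := dualCoaction_counit hb

end DualCoaction

section Colinear

variable [AddCommGroup M] [Module k M] {ι : Type*} [Fintype ι] {b : ι → C}
  {β : ι → C →ₗ[k] k}

lemma isColinear_dualComodule_iff (hb : ∀ c, ∑ i, β i c • b i = c) (σ : RightComodule k C M)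
    (q : M →ₗ[k] C →ₗ[k] k) :
    IsColinear σ (dualComodule b β hb) q ↔
      ∀ x g, slice g (q.rTensor C (σ.ρ x)) = starMul (q x) g := by
  constructor
  · intro h x g
    rw [← slice_dualCoaction hb]
    exact congrArg (slice g) (LinearMap.congr_fun h x)
  · intro h
    refine LinearMap.ext fun x => eq_of_slice_eq hb fun i => ?_
    exact (h x (β i)).trans (slice_dualCoaction hb _ _).symm

lemma QSet_eq_setOf_isColinear (hb : ∀ c, ∑ i, β i c • b i = c) (σ : RightComodule k C M) :
    QSet σ = {q | IsColinear σ (dualComodule b β hb) q} := by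
  ext q
  simp only [QSet, Set.mem_ofPred_eq, isColinear_dualComodule_iff hb]
  constructor
  · intro hq x g
    ext c
    rw [slice_rTensor_apply, hq, starMul_apply]
    rfl
  · intro h x c
    refine eq_of_dual_eq hb fun i => ?_
    rw [← slice_rTensor_apply, h, starMul_apply]
    rfl

end Colinear

theorem stmt_19 {P : Type*} [AddCommGroup P] [Module k P] (σ : RightComodule k C P)
    -- `C` is finitely generated projective over `k`, with dual basis `{cᵢ}, {fᵢ}`
    (n : ℕ) (cb : Fin n → C) (fb : Fin n → (C →ₗ[k] k))
    (hdb : ∀ c : C, ∑ i, fb i c • cb i = c) :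
    -- `C*` is a right `C`-comodule with coaction `f ↦ ∑ᵢ (f * fᵢ) ⊗ cᵢ` …
    ∃ ρstar : RightComodule k C (C →ₗ[k] k),
      (∀ f : C →ₗ[k] k, ρstar.ρ f = ∑ i, (starMul f (fb i)) ⊗ₜ[k] cb i) ∧
      -- … independently of the chosen dual basis …
      (∀ (m : ℕ) (cb' : Fin m → C) (fb' : Fin m → (C →ₗ[k] k)),
        (∀ c : C, ∑ j, fb' j c • cb' j = c) →
        ∀ f : C →ₗ[k] k, ρstar.ρ f = ∑ j, (starMul f (fb' j)) ⊗ₜ[k] cb' j) ∧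
      -- … and `Q` coincides with the right `C`-colinear maps `P → C*`
      QSet σ = {q : P →ₗ[k] C →ₗ[k] k | IsColinear σ ρstar q} :=
  ⟨dualComodule cb fb hdb, fun _ => rfl,
    fun _ _ _ hdb' => dualCoaction_eq_sum hdb hdb', QSet_eq_setOf_isColinear hdb σ⟩
end
end
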